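/- Let G be a finite symmetry group for the substitution tiling system (𝒫, ω) which acts freely on 𝒫. Then the only subsets E ⊆ Ω_punc that are open in the tiling metric topology and invariant for R_punc ⋊ G (i.e. T ∈ E, (T, T') ∈ R_punc and g ∈ G imply g⁻¹T' ∈ E) are ∅ and Ω_punc; equivalently, for every T ∈ Ω_punc the orbit {g⁻¹(T + x) : g ∈ G, x ∈ ℝ^d, T + x ∈ Ω_punc} is dense in Ω_punc. -/

import Mathlib

open Metric Set Pointwise

noncomputable section

/-- Points of `ℝ^d`. -/
abbrev Pt (d : ℕ) := EuclideanSpace ℝ (Fin d)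

/-- A (possibly labelled) tile in `ℝ^d`: a subset of `ℝ^d` together with a label. -/
structure Tile (d : ℕ) where
  carrier : Set (Pt d)
  label : ℕ

instance {d : ℕ} : Inhabited (Tile d) := ⟨⟨∅, 0⟩⟩

/-- Translate of a tile by a vector. -/
def Tile.translate {d : ℕ} (t : Tile d) (x : Pt d) : Tile d :=
  ⟨(fun y => y + x) '' t.carrier, t.label⟩

/-- A tile proper: homeomorphic to the closed unit ball. -/
def Tile.IsTile {d : ℕ} (t : Tile d) : Prop :=
  Nonempty (t.carrier ≃ₜ (Metric.closedBall (0 : Pt d) 1))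

/-- Support of a partial tiling: the union of its tiles. -/
def psupp {d : ℕ} (P : Set (Tile d)) : Set (Pt d) := ⋃ t ∈ P, t.carrier

/-- `tilesAt P U` = the tiles of `P` meeting `U`, written `P(U)` in the paper. -/
def tilesAt {d : ℕ} (P : Set (Tile d)) (U : Set (Pt d)) : Set (Tile d) :=
  {t ∈ P | (t.carrier ∩ U).Nonempty}

/-- Translate of a collection of tiles. -/
def translateSet {d : ℕ} (P : Set (Tile d)) (x : Pt d) : Set (Tile d) :=
  (fun t => t.translate x) '' P

/-- A partial tiling: tiles with pairwise disjoint interiors. -/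
def IsPartialTiling {d : ℕ} (P : Set (Tile d)) : Prop :=
  (∀ t ∈ P, t.IsTile) ∧
  ∀ t ∈ P, ∀ t' ∈ P, t ≠ t' → interior t.carrier ∩ interior t'.carrier = ∅

/-- A patch: a finite partial tiling. -/
def IsPatch {d : ℕ} (P : Set (Tile d)) : Prop := IsPartialTiling P ∧ P.Finite

/-- A tiling of all of `ℝ^d`. -/
def IsTilingOfSpace {d : ℕ} (P : Set (Tile d)) : Prop :=
  IsPartialTiling P ∧ psupp P = univ

/-- A substitution tiling system `(𝒫, ω)` with inflation constant `λ > 1`. -/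
structure SubstSystem (d : ℕ) where
  proto : Set (Tile d)
  proto_finite : proto.Finite
  proto_nonempty : proto.Nonempty
  proto_isTile : ∀ p ∈ proto, p.IsTile
  proto_zero_mem : ∀ p ∈ proto, (0 : Pt d) ∈ interior p.carrier
  proto_no_translate : ∀ p ∈ proto, ∀ q ∈ proto, ∀ x : Pt d,
    q = p.translate x → p = q ∧ x = 0
  lam : ℝ
  one_lt_lam : 1 < lam
  sub : Tile d → Set (Tile d)
  sub_patch : ∀ p ∈ proto, IsPatch (sub p)
  sub_proto : ∀ p ∈ proto, ∀ t ∈ sub p, ∃ q ∈ proto, ∃ x : Pt d, t = q.translate x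
  sub_supp : ∀ p ∈ proto, psupp (sub p) = lam • p.carrier
  sub_translate : ∀ (t : Tile d) (x : Pt d),
    sub (t.translate x) = (fun s => s.translate (lam • x)) '' sub t

namespace SubstSystem

variable {d : ℕ} (S : SubstSystem d)

/-- Tile-wise application of the substitution to a collection of tiles. -/
def subSet (P : Set (Tile d)) : Set (Tile d) := ⋃ t ∈ P, S.sub t

/-- Iterated substitution `ω^n` on collections of tiles. -/
def subIter (n : ℕ) (P : Set (Tile d)) : Set (Tile d) := (S.subSet)^[n] P

/-- `ω^n(t)` for a single tile `t`. -/
def omegan (n : ℕ) (t : Tile d) : Set (Tile d) := S.subIter n {t}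

/-- The continuous hull `Ω`. -/
def Omega : Set (Set (Tile d)) :=
  {T | IsTilingOfSpace T ∧ ∀ P : Set (Tile d), P ⊆ T → IsPatch P →
    ∃ n : ℕ, ∃ p ∈ S.proto, ∃ x : Pt d, P ⊆ translateSet (S.omegan n p) x}

/-- `x` is the puncture of the tile `t`, i.e. `t = p + x` for a prototile `p`. -/
def IsPuncture (t : Tile d) (x : Pt d) : Prop :=
  ∃ p ∈ S.proto, t = p.translate x

open Classical in
/-- The puncture `x(t)` of a tile `t` (chosen; unique for translates of prototiles). -/
def punc (t : Tile d) : Pt d :=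
  if h : ∃ x : Pt d, S.IsPuncture t x then h.choose else 0

/-- The punctured hull (transversal) `Ω_punc`. -/
def OmegaPunc : Set (Set (Tile d)) :=
  {T ∈ S.Omega | ∃ t ∈ T, S.IsPuncture t 0}

end SubstSystem

/-- The tiling metric. -/
def tilingDist {d : ℕ} (T T' : Set (Tile d)) : ℝ :=
  sInf ({1} ∪ {ε : ℝ | 0 < ε ∧ ∃ x x' : Pt d, ‖x‖ < ε ∧ ‖x'‖ < ε ∧
    tilesAt (translateSet T (-x)) (ball (0 : Pt d) (1 / ε)) =
      tilesAt (translateSet T' (-x')) (ball (0 : Pt d) (1 / ε))})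

namespace SubstSystem

variable {d : ℕ} (S : SubstSystem d)

/-- Density of a family of tilings in `Ω_punc` w.r.t. the tiling metric. -/
def DenseInPunc (E : Set (Set (Tile d))) : Prop :=
  ∀ T ∈ S.OmegaPunc, ∀ ε : ℝ, 0 < ε → ∃ T' ∈ E, tilingDist T T' < ε

/-- Openness of a subset of `Ω_punc` w.r.t. the tiling metric (subspace topology). -/
def OpenInPunc (E : Set (Set (Tile d))) : Prop :=
  E ⊆ S.OmegaPunc ∧ ∀ T ∈ E, ∃ ε : ℝ, 0 < ε ∧
    ∀ T' ∈ S.OmegaPunc, tilingDist T T' < ε → T' ∈ E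

/-- The translational equivalence relation `R_punc` on `Ω_punc`. -/
def Rpunc : Set (Set (Tile d) × Set (Tile d)) :=
  {TT | TT.1 ∈ S.OmegaPunc ∧ TT.2 ∈ S.OmegaPunc ∧ ∃ x : Pt d, TT.2 = translateSet TT.1 x}

/-- `Punc(n, p)`: the punctures of the tiles of `ω^n(p)`. -/
def Punc (n : ℕ) (p : Tile d) : Set (Pt d) :=
  {x | ∃ t ∈ S.omegan n p, S.IsPuncture t x}

/-- `E^n_p(x, y)`. -/
def Eset (n : ℕ) (p : Tile d) (x y : Pt d) : Set (Set (Tile d) × Set (Tile d)) :=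
  {TT | ∃ T ∈ S.OmegaPunc, p ∈ T ∧
    TT.1 = translateSet (S.subIter n T) (-x) ∧ TT.2 = translateSet (S.subIter n T) (-y)}

/-- `R_n`. -/
def Rn (n : ℕ) : Set (Set (Tile d) × Set (Tile d)) :=
  ⋃ p ∈ S.proto, ⋃ x ∈ S.Punc n p, ⋃ y ∈ S.Punc n p, S.Eset n p x y

/-- `R_AF = ∪ₙ R_n`. -/
def RAF : Set (Set (Tile d) × Set (Tile d)) := ⋃ n : ℕ, S.Rn n

/-- `U(P, t)`. -/
def Uset (P : Set (Tile d)) (t : Tile d) : Set (Set (Tile d)) :=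
  {T ∈ S.OmegaPunc | translateSet P (-(S.punc t)) ⊆ T}

/-- `V(P, t₁, t₂)`. -/
def Vset (P : Set (Tile d)) (t₁ t₂ : Tile d) : Set (Set (Tile d) × Set (Tile d)) :=
  {TT | TT.1 ∈ S.Uset P t₁ ∧ TT.2 = translateSet TT.1 (S.punc t₁ - S.punc t₂)}

/-- (A1) primitivity. -/
def Primitive : Prop :=
  ∃ N : ℕ, ∀ p ∈ S.proto, ∀ q ∈ S.proto, ∃ x : Pt d, Tile.translate q x ∈ S.omegan N p

/-- (A2) finite local complexity. -/
def FLC : Prop :=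
  ∀ R : ℝ, 0 < R → ∃ Ps : Set (Set (Tile d)), Ps.Finite ∧
    ∀ P : Set (Tile d), IsPatch P → Metric.diam (psupp P) < R →
      (∃ T ∈ S.Omega, P ⊆ T) → ∃ P₀ ∈ Ps, ∃ x : Pt d, P = translateSet P₀ x

/-- (A3) `ω : Ω → Ω` is bijective. -/
def SubBijective : Prop := Set.BijOn S.subSet S.Omega S.Omega

/-- (A4) `ω` forces its border. -/
def ForcesBorder : Prop :=
  ∃ n : ℕ, ∀ p ∈ S.proto, ∀ T ∈ S.Omega, ∀ T' ∈ S.Omega, ∀ x x' : Pt d,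
    translateSet (S.omegan n p) x ⊆ T → translateSet (S.omegan n p) x' ⊆ T' →
    translateSet (tilesAt T ((fun y => y + x) '' psupp (S.omegan n p))) (-x) =
      translateSet (tilesAt T' ((fun y => y + x') '' psupp (S.omegan n p))) (-x')

/-- Prototile boundaries have box-counting dimension strictly less than `d`. -/
def SmallBoundary : Prop :=
  ∃ c : ℝ, c < d ∧ ∃ K₀ : ℝ, ∀ p ∈ S.proto, ∀ ε : ℝ, 0 < ε →
    ∃ centers : Finset (Pt d), (centers.card : ℝ) ≤ K₀ * ε ^ (-c) ∧
      frontier p.carrier ⊆ ⋃ z ∈ centers, ball z ε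

end SubstSystem

/-- A symmetry group action for `(𝒫, ω)`: `G ≤ O(d, ℝ)` acting on tiles, preserving
the prototile set and commuting with the substitution. -/
structure SymmAction {d : ℕ} (S : SubstSystem d) (G : Subgroup (Pt d ≃ₗᵢ[ℝ] Pt d)) where
  act : G → Tile d → Tile d
  act_carrier : ∀ (g : G) (t : Tile d),
    (act g t).carrier = (g : Pt d ≃ₗᵢ[ℝ] Pt d) '' t.carrier
  act_one : ∀ t : Tile d, act 1 t = t
  act_mul : ∀ (g h : G) (t : Tile d), act (g * h) t = act g (act h t)
  act_proto : ∀ (g : G), ∀ p ∈ S.proto, act g p ∈ S.proto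
  act_translate : ∀ (g : G) (t : Tile d) (x : Pt d),
    act g (t.translate x) = (act g t).translate ((g : Pt d ≃ₗᵢ[ℝ] Pt d) x)
  act_sub : ∀ (g : G), ∀ p ∈ S.proto, S.sub (act g p) = act g '' S.sub p

/-- Action of a group element on a (partial) tiling: `gT = {gt : t ∈ T}`. -/
def SymmAction.actSet {d : ℕ} {S : SubstSystem d} {G : Subgroup (Pt d ≃ₗᵢ[ℝ] Pt d)}
    (σ : SymmAction S G) (g : G) (T : Set (Tile d)) : Set (Tile d) := σ.act g '' T

/-- `G` acts freely on the prototile set. -/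
def SymmAction.FreeOnProto {d : ℕ} {S : SubstSystem d} {G : Subgroup (Pt d ≃ₗᵢ[ℝ] Pt d)}
    (σ : SymmAction S G) : Prop := ∀ g : G, ∀ p ∈ S.proto, σ.act g p = p → g = 1

/-- Composition of relations. -/
def relComp {α : Type*} (R₁ R₂ : Set (α × α)) : Set (α × α) :=
  {q | ∃ z : α, (q.1, z) ∈ R₁ ∧ (z, q.2) ∈ R₂}

/-- Transpose (inverse) of a relation. -/
def relTrans {α : Type*} (R : Set (α × α)) : Set (α × α) := {q | (q.2, q.1) ∈ R}

end

/-!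
Translation orbits are already dense. By (A3) every tiling of `Ω` is `ω^n` of a tiling of `Ω`, so
by (A1) it contains a translate of every supertile `ω^n(p)`; as every patch of a tiling of `Ω` lies
in a translated supertile, it appears, translated, in every tiling of `Ω`. Take the finite patch of
`T₀` meeting a large ball and a translate of `T` containing it. A tile of this translate that meets
a smaller ball has its interior covered by the patch; an open set is not contained in the finitely
many tile boundaries, so the tile overlaps, hence equals, a tile of the patch. Thus the translate
agrees with `T₀` around the origin, which is closeness in the tiling metric.
-/

theorem TotallyBounded.finite_of_eq_of_dist_lt {X : Type*} [PseudoMetricSpace X] {s : Set X}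
    (hs : TotallyBounded s) {r : ℝ} (hr : 0 < r)
    (h : ∀ x ∈ s, ∀ y ∈ s, dist x y < r → x = y) : s.Finite := by
  obtain ⟨net, hnet, hcover⟩ := Metric.totallyBounded_iff.mp hs (r / 2) (half_pos hr)
  refine (hnet.biUnion fun y _ => Subsingleton.finite (s := s ∩ ball y (r / 2)) ?_).subset ?_
  · rintro a ⟨ha, hay⟩ b ⟨hb, hby⟩
    refine h a ha b hb ?_
    linarith [dist_triangle_right a b y, mem_ball.mp hay, mem_ball.mp hby]
  · intro a ha
    obtain ⟨y, hy, hay⟩ := mem_iUnion₂.mp (hcover ha)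
    exact mem_iUnion₂.mpr ⟨y, hy, ha, hay⟩

namespace Tile

variable {d : ℕ}

theorem translate_translate (t : Tile d) (a b : Pt d) :
    (t.translate a).translate b = t.translate (a + b) := by
  simp only [translate, image_image, add_assoc]

@[simp] theorem translate_zero (t : Tile d) : t.translate 0 = t := by
  simp [translate]

theorem IsTile.translate {t : Tile d} (h : t.IsTile) (x : Pt d) : (t.translate x).IsTile :=
  let ⟨e⟩ := h
  ⟨((Homeomorph.addRight x).image t.carrier).symm.trans e⟩

theorem IsTile.isCompact {t : Tile d} (h : t.IsTile) : IsCompact t.carrier :=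
  let ⟨e⟩ := h
  have : CompactSpace (closedBall (0 : Pt d) 1) :=
    isCompact_iff_compactSpace.mp (isCompact_closedBall _ _)
  isCompact_iff_compactSpace.mpr e.symm.compactSpace

theorem IsTile.isClosed {t : Tile d} (h : t.IsTile) : IsClosed t.carrier :=
  h.isCompact.isClosed

theorem interior_translate (t : Tile d) (x : Pt d) :
    interior (t.translate x).carrier = (· + x) '' interior t.carrier :=
  ((Homeomorph.addRight x).image_interior t.carrier).symm

end Tile

section PartialTiling

variable {d : ℕ}

@[simp] theorem translateSet_zero (P : Set (Tile d)) : translateSet P 0 = P := by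
  simp [translateSet]

theorem translateSet_translateSet (P : Set (Tile d)) (a b : Pt d) :
    translateSet (translateSet P a) b = translateSet P (a + b) := by
  simp only [translateSet, image_image, Tile.translate_translate]

theorem translateSet_singleton (t : Tile d) (x : Pt d) :
    translateSet {t} x = {t.translate x} :=
  image_singleton

theorem translateSet_subset_iff {P Q : Set (Tile d)} {x : Pt d} :
    translateSet P x ⊆ Q ↔ P ⊆ translateSet Q (-x) := by
  constructor
  · intro h t ht
    exact ⟨t.translate x, h ⟨t, ht, rfl⟩, by simp [Tile.translate_translate]⟩
  · rintro h _ ⟨t, ht, rfl⟩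
    obtain ⟨s, hs, rfl⟩ := h ht
    simpa [Tile.translate_translate] using hs

theorem psupp_translateSet (P : Set (Tile d)) (x : Pt d) :
    psupp (translateSet P x) = (· + x) '' psupp P := by
  simp only [psupp, translateSet, biUnion_image, Tile.translate, image_iUnion₂]

theorem IsPartialTiling.translateSet {P : Set (Tile d)} (h : IsPartialTiling P) (x : Pt d) :
    IsPartialTiling (translateSet P x) := by
  refine ⟨?_, ?_⟩
  · rintro _ ⟨t, ht, rfl⟩
    exact (h.1 t ht).translate x
  · rintro _ ⟨t, ht, rfl⟩ _ ⟨t', ht', rfl⟩ hne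
    rw [Tile.interior_translate, Tile.interior_translate,
      ← image_inter (add_left_injective x), h.2 t ht t' ht' (fun h => hne (h ▸ rfl)),
      image_empty]

theorem IsPatch.translateSet {P : Set (Tile d)} (h : IsPatch P) (x : Pt d) :
    IsPatch (translateSet P x) :=
  ⟨h.1.translateSet x, h.2.image _⟩

theorem IsTilingOfSpace.translateSet {T : Set (Tile d)} (h : IsTilingOfSpace T) (x : Pt d) :
    IsTilingOfSpace (translateSet T x) :=
  ⟨h.1.translateSet x, by
    rw [psupp_translateSet, h.2, image_univ_of_surjective (add_right_surjective x)]⟩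

theorem IsPartialTiling.mem_of_interior_subset_psupp {T P : Set (Tile d)}
    (hT : IsPartialTiling T) (hPT : P ⊆ T) (hP : P.Countable) {t : Tile d} (ht : t ∈ T)
    (hne : (interior t.carrier).Nonempty) (hsub : interior t.carrier ⊆ psupp P) : t ∈ P := by
  by_contra htP
  have hfrontier : interior t.carrier ⊆ ⋃ s ∈ P, frontier s.carrier := by
    intro v hv
    obtain ⟨s, hs, hvs⟩ := mem_iUnion₂.mp (hsub hv)
    have hst : t ≠ s := fun h => htP (h ▸ hs)
    refine mem_iUnion₂.mpr ⟨s, hs, ?_⟩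
    rw [(hT.1 s (hPT hs)).isClosed.frontier_eq]
    exact ⟨hvs, fun hvs' => (eq_empty_iff_forall_notMem.mp (hT.2 t ht s (hPT hs) hst)) v
      ⟨hv, hvs'⟩⟩
  have hmeagre : IsMeagre (⋃ s ∈ P, frontier s.carrier) :=
    isMeagre_biUnion hP fun s hs => IsNowhereDense.isMeagre <|
      isClosed_frontier.isNowhereDense_iff.mpr
        (interior_frontier (hT.1 s (hPT hs)).isClosed)
  exact not_isMeagre_of_isOpen isOpen_interior hne (hmeagre.mono hfrontier)

end PartialTiling

theorem tilingDist_le_of_tilesAt_ball_eq {d : ℕ} {T T' : Set (Tile d)} {ε : ℝ} (hε : 0 < ε)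
    (h : tilesAt T (ball (0 : Pt d) (1 / ε)) = tilesAt T' (ball (0 : Pt d) (1 / ε))) :
    tilingDist T T' ≤ ε :=
  csInf_le ⟨0, by rintro a (rfl | ⟨ha, -⟩) <;> positivity⟩
    (Or.inr ⟨hε, 0, 0, by simpa using hε, by simpa using hε, by simpa using h⟩)

@[simp] theorem SymmAction.actSet_one {d : ℕ} {S : SubstSystem d}
    {G : Subgroup (Pt d ≃ₗᵢ[ℝ] Pt d)} (σ : SymmAction S G) (T : Set (Tile d)) :
    σ.actSet 1 T = T := by
  simp [SymmAction.actSet, σ.act_one]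

namespace SubstSystem

section IsPuncture

variable {d : ℕ} {S : SubstSystem d}

theorem IsPuncture.translate {t : Tile d} {z : Pt d} (h : S.IsPuncture t z)
    (x : Pt d) : S.IsPuncture (t.translate x) (z + x) :=
  let ⟨p, hp, e⟩ := h
  ⟨p, hp, by rw [e, Tile.translate_translate]⟩

theorem IsPuncture.unique {t : Tile d} {z z' : Pt d} (h : S.IsPuncture t z)
    (h' : S.IsPuncture t z') : z = z' := by
  obtain ⟨p, hp, rfl⟩ := h
  obtain ⟨p', hp', e⟩ := h'
  have : p' = p.translate (z - z') := by
    rw [sub_eq_add_neg, ← Tile.translate_translate, e, Tile.translate_translate, add_neg_cancel,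
      Tile.translate_zero]
  exact sub_eq_zero.mp (S.proto_no_translate p hp p' hp' _ this).2

theorem IsPuncture.self_mem_interior {t : Tile d} {z : Pt d} (h : S.IsPuncture t z) :
    z ∈ interior t.carrier := by
  obtain ⟨p, hp, rfl⟩ := h
  rw [Tile.interior_translate]
  exact ⟨0, S.proto_zero_mem p hp, zero_add z⟩

theorem IsPuncture.dist_le {t : Tile d} {z : Pt d} (h : S.IsPuncture t z) {C : ℝ}
    (hC : ∀ p ∈ S.proto, p.carrier ⊆ closedBall (0 : Pt d) C) {w : Pt d}
    (hw : w ∈ t.carrier) : dist w z ≤ C := by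
  obtain ⟨p, hp, rfl⟩ := h
  obtain ⟨y, hy, rfl⟩ := hw
  simpa using hC p hp hy

theorem IsPuncture.mem_interior {t : Tile d} {z : Pt d} (h : S.IsPuncture t z) {r : ℝ}
    (hr : ∀ p ∈ S.proto, ball (0 : Pt d) r ⊆ interior p.carrier) {w : Pt d}
    (hw : dist w z < r) : w ∈ interior t.carrier := by
  obtain ⟨p, hp, rfl⟩ := h
  rw [Tile.interior_translate]
  exact ⟨w - z, hr p hp (by simpa [dist_eq_norm] using hw), sub_add_cancel w z⟩

end IsPuncture

variable {d : ℕ} (S : SubstSystem d)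

theorem subSet_mono {P Q : Set (Tile d)} (h : P ⊆ Q) : S.subSet P ⊆ S.subSet Q :=
  biUnion_subset_biUnion_left h

theorem subIter_mono {P Q : Set (Tile d)} (h : P ⊆ Q) (n : ℕ) :
    S.subIter n P ⊆ S.subIter n Q := by
  induction n with
  | zero => exact h
  | succ n ih =>
    simp only [subIter, Function.iterate_succ_apply']
    exact S.subSet_mono ih

theorem omegan_subset_subIter {P : Set (Tile d)} {t : Tile d} (ht : t ∈ P) (n : ℕ) :
    S.omegan n t ⊆ S.subIter n P :=
  S.subIter_mono (singleton_subset_iff.mpr ht) n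

theorem subSet_translateSet (P : Set (Tile d)) (x : Pt d) :
    S.subSet (translateSet P x) = translateSet (S.subSet P) (S.lam • x) := by
  simp only [subSet, translateSet, biUnion_image, S.sub_translate, image_iUnion₂]

theorem subIter_translateSet (n : ℕ) (P : Set (Tile d)) (x : Pt d) :
    S.subIter n (translateSet P x) = translateSet (S.subIter n P) (S.lam ^ n • x) := by
  induction n with
  | zero => simp [subIter]
  | succ n ih =>
    simp only [subIter, Function.iterate_succ_apply'] at ih ⊢
    rw [ih, subSet_translateSet, smul_smul, pow_succ']

theorem omegan_translate (n : ℕ) (t : Tile d) (x : Pt d) :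
    S.omegan n (t.translate x) = translateSet (S.omegan n t) (S.lam ^ n • x) := by
  rw [omegan, ← translateSet_singleton, subIter_translateSet, omegan]

theorem exists_isPuncture_of_mem_subIter {P : Set (Tile d)}
    (hP : ∀ t ∈ P, ∃ z, S.IsPuncture t z) (n : ℕ) :
    ∀ t ∈ S.subIter n P, ∃ z, S.IsPuncture t z := by
  induction n with
  | zero => exact hP
  | succ n ih =>
    intro t ht
    simp only [subIter, Function.iterate_succ_apply', subSet, mem_iUnion₂] at ht
    obtain ⟨s, hs, hts⟩ := ht
    obtain ⟨z, q, hq, rfl⟩ := ih s hs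
    rw [S.sub_translate] at hts
    obtain ⟨v, hv, rfl⟩ := hts
    obtain ⟨p, hp, w, rfl⟩ := S.sub_proto q hq v hv
    exact ⟨_, (show S.IsPuncture (p.translate w) w from ⟨p, hp, rfl⟩).translate _⟩

theorem exists_isPuncture_of_mem_Omega {T : Set (Tile d)} (hT : T ∈ S.Omega) :
    ∀ t ∈ T, ∃ z, S.IsPuncture t z := by
  intro t ht
  have hpatch : IsPatch {t} :=
    ⟨⟨by simpa using hT.1.1.1 t ht, by simp⟩, finite_singleton t⟩
  obtain ⟨n, p, hp, x, hsub⟩ := hT.2 {t} (singleton_subset_iff.mpr ht) hpatch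
  obtain ⟨s, hs, rfl⟩ := hsub rfl
  obtain ⟨z, hz⟩ := S.exists_isPuncture_of_mem_subIter
    (fun t ht => ⟨0, p, hp, by rw [ht, Tile.translate_zero]⟩) n s hs
  exact ⟨z + x, hz.translate x⟩

theorem translateSet_mem_Omega {T : Set (Tile d)} (hT : T ∈ S.Omega) (x : Pt d) :
    translateSet T x ∈ S.Omega := by
  refine ⟨hT.1.translateSet x, fun P hP hPpatch => ?_⟩
  obtain ⟨n, p, hp, y, hsub⟩ :=
    hT.2 _ (translateSet_subset_iff.mpr (by simpa using hP)) (hPpatch.translateSet (-x))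
  refine ⟨n, p, hp, y + x, ?_⟩
  rw [← translateSet_translateSet, ← neg_neg x]
  exact translateSet_subset_iff.mp hsub

theorem exists_subIter_eq (hA3 : S.SubBijective) {T : Set (Tile d)} (hT : T ∈ S.Omega)
    (n : ℕ) : ∃ T' ∈ S.Omega, S.subIter n T' = T := by
  induction n with
  | zero => exact ⟨T, hT, rfl⟩
  | succ n ih =>
    obtain ⟨T', hT', rfl⟩ := ih
    obtain ⟨T'', hT'', rfl⟩ := hA3.surjOn hT'
    exact ⟨T'', hT'', Function.iterate_succ_apply _ _ _⟩

theorem exists_translateSet_omegan_subset (hA1 : S.Primitive) (hA3 : S.SubBijective)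
    {T : Set (Tile d)} (hT : T ∈ S.Omega) {p : Tile d} (hp : p ∈ S.proto) (n : ℕ) :
    ∃ u : Pt d, translateSet (S.omegan n p) u ⊆ T := by
  obtain ⟨N, hN⟩ := hA1
  obtain ⟨T₁, hT₁, rfl⟩ := S.exists_subIter_eq hA3 hT n
  obtain ⟨T₂, hT₂, rfl⟩ := S.exists_subIter_eq hA3 hT₁ N
  obtain ⟨t, ht, -⟩ := mem_iUnion₂.mp (hT₂.1.2.symm ▸ mem_univ (0 : Pt d) : (0 : Pt d) ∈ psupp T₂)
  obtain ⟨z, q, hq, rfl⟩ := S.exists_isPuncture_of_mem_Omega hT₂ t ht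
  obtain ⟨w, hw⟩ := hN q hq p hp
  -- `ω^N(q + z)` contains a translate of `p`, hence `ω^(n+N)(q + z)` one of `ω^n(p)`
  have hpT₁ : p.translate (w + S.lam ^ N • z) ∈ S.subIter N T₂ := by
    refine S.omegan_subset_subIter ht N ?_
    rw [omegan_translate]
    exact ⟨_, hw, Tile.translate_translate _ _ _⟩
  refine ⟨S.lam ^ n • (w + S.lam ^ N • z), ?_⟩
  rw [← omegan_translate]
  exact S.omegan_subset_subIter hpT₁ n

theorem exists_subset_translateSet_of_isPatch (hA1 : S.Primitive) (hA3 : S.SubBijective)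
    {T₀ T P : Set (Tile d)} (hT₀ : T₀ ∈ S.Omega) (hT : T ∈ S.Omega) (hPT₀ : P ⊆ T₀)
    (hP : IsPatch P) : ∃ x : Pt d, P ⊆ translateSet T x := by
  obtain ⟨n, p, hp, y, hPy⟩ := hT₀.2 P hPT₀ hP
  obtain ⟨u, hu⟩ := S.exists_translateSet_omegan_subset hA1 hA3 hT hp n
  refine ⟨y - u, hPy.trans ?_⟩
  rw [← add_sub_cancel u y, ← translateSet_translateSet, add_sub_cancel_left]
  exact image_mono hu

theorem exists_ball_subset_interior_proto :
    ∃ r > 0, ∀ p ∈ S.proto, ball (0 : Pt d) r ⊆ interior p.carrier := by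
  have hopen : IsOpen (⋂ p ∈ S.proto, interior p.carrier) :=
    S.proto_finite.isOpen_biInter fun _ _ => isOpen_interior
  obtain ⟨r, hr, hball⟩ := Metric.isOpen_iff.mp hopen 0 (mem_iInter₂.mpr S.proto_zero_mem)
  exact ⟨r, hr, fun p hp => hball.trans (biInter_subset_of_mem hp)⟩

theorem exists_proto_subset_closedBall :
    ∃ C > 0, ∀ p ∈ S.proto, p.carrier ⊆ closedBall (0 : Pt d) C := by
  obtain ⟨C, hC0, hC⟩ := ((Bornology.isBounded_biUnion S.proto_finite).mpr fun p hp =>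
    (S.proto_isTile p hp).isCompact.isBounded).subset_closedBall_lt 0 (0 : Pt d)
  exact ⟨C, hC0, fun p hp => (subset_biUnion_of_mem hp).trans hC⟩

variable {S}

theorem _root_.IsPartialTiling.eq_of_dist_lt {T : Set (Tile d)} (hT : IsPartialTiling T) {r : ℝ}
    (hr : ∀ p ∈ S.proto, ball (0 : Pt d) r ⊆ interior p.carrier) {t t' : Tile d} (ht : t ∈ T)
    (ht' : t' ∈ T) {z z' : Pt d} (hz : S.IsPuncture t z) (hz' : S.IsPuncture t' z')
    (h : dist z z' < r) : t = t' := by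
  by_contra hne
  have hz't : z' ∈ interior t.carrier := hz.mem_interior hr (by rwa [dist_comm])
  exact (eq_empty_iff_forall_notMem.mp (hT.2 t ht t' ht' hne)) z' ⟨hz't, hz'.self_mem_interior⟩

theorem _root_.IsPartialTiling.finite_tilesAt_ball {T : Set (Tile d)} (hT : IsPartialTiling T)
    (hpunc : ∀ t ∈ T, ∃ z, S.IsPuncture t z) (M : ℝ) :
    (tilesAt T (ball (0 : Pt d) M)).Finite := by
  obtain ⟨r, hr, hrp⟩ := S.exists_ball_subset_interior_proto
  obtain ⟨C, -, hC⟩ := S.exists_proto_subset_closedBall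
  set Z := {z ∈ closedBall (0 : Pt d) (M + C) | ∃ t ∈ T, S.IsPuncture t z}
  have hZ : Z.Finite := by
    refine TotallyBounded.finite_of_eq_of_dist_lt
      ((isCompact_closedBall _ _).totallyBounded.subset (sep_subset _ _)) hr ?_
    rintro z ⟨-, t, ht, hz⟩ z' ⟨-, t', ht', hz'⟩ hzz'
    obtain rfl := hT.eq_of_dist_lt hrp ht ht' hz hz' hzz'
    exact hz.unique hz'
  refine (S.proto_finite.image2 (fun p z => p.translate z) hZ).subset ?_
  rintro t ⟨ht, w, hwt, hwM⟩
  obtain ⟨z, hz⟩ := hpunc t ht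
  obtain ⟨p, hp, rfl⟩ := id hz
  refine ⟨p, hp, z, ⟨?_, _, ht, hz⟩, rfl⟩
  rw [mem_closedBall]
  linarith [dist_triangle z w 0, dist_comm z w ▸ hz.dist_le hC hwt, mem_ball.mp hwM]

theorem tilesAt_ball_eq_of_subset {T₀ T : Set (Tile d)} (hT₀ : IsTilingOfSpace T₀)
    (hT : IsPartialTiling T) (hpunc : ∀ t ∈ T, ∃ z, S.IsPuncture t z) {C : ℝ}
    (hC : ∀ p ∈ S.proto, p.carrier ⊆ closedBall (0 : Pt d) C) {ρ R : ℝ} (hR : ρ + 2 * C < R)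
    (hP : (tilesAt T₀ (ball (0 : Pt d) R)).Countable) (hPT : tilesAt T₀ (ball (0 : Pt d) R) ⊆ T) :
    tilesAt T₀ (ball (0 : Pt d) ρ) = tilesAt T (ball (0 : Pt d) ρ) := by
  have hC0 : 0 ≤ C := by
    obtain ⟨p, hp⟩ := S.proto_nonempty
    simpa using hC p hp (interior_subset (S.proto_zero_mem p hp))
  ext t
  constructor
  · rintro ⟨ht, hmeet⟩
    exact ⟨hPT ⟨ht, hmeet.mono (inter_subset_inter_right _ (ball_subset_ball (by linarith)))⟩,
      hmeet⟩
  · rintro ⟨ht, w, hwt, hwρ⟩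
    obtain ⟨z, hz⟩ := hpunc t ht
    have hball : t.carrier ⊆ ball (0 : Pt d) R := fun v hv => mem_ball.mpr <| by
      linarith [dist_triangle v z 0, dist_triangle z w 0, dist_comm z w ▸ hz.dist_le hC hwt,
        hz.dist_le hC hv, mem_ball.mp hwρ]
    have hsupp : interior t.carrier ⊆ psupp (tilesAt T₀ (ball (0 : Pt d) R)) := fun v hv => by
      obtain ⟨s, hs, hvs⟩ := mem_iUnion₂.mp (hT₀.2.symm ▸ mem_univ v : v ∈ psupp T₀)
      exact mem_iUnion₂.mpr ⟨s, ⟨hs, v, hvs, hball (interior_subset hv)⟩, hvs⟩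
    have htP := hT.mem_of_interior_subset_psupp hPT hP ht ⟨z, hz.self_mem_interior⟩ hsupp
    exact ⟨htP.1, w, hwt, hwρ⟩

variable (S)

theorem exists_translate_tilesAt_ball_eq (hA1 : S.Primitive) (hA3 : S.SubBijective)
    {T₀ T : Set (Tile d)} (hT₀ : T₀ ∈ S.OmegaPunc) (hT : T ∈ S.OmegaPunc) {ρ : ℝ} (hρ : 0 < ρ) :
    ∃ x : Pt d, translateSet T x ∈ S.OmegaPunc ∧
      tilesAt T₀ (ball (0 : Pt d) ρ) = tilesAt (translateSet T x) (ball (0 : Pt d) ρ) := by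
  obtain ⟨C, hC0, hC⟩ := S.exists_proto_subset_closedBall
  set P := tilesAt T₀ (ball (0 : Pt d) (ρ + 2 * C + 1))
  have hPfin : P.Finite :=
    hT₀.1.1.1.finite_tilesAt_ball (S.exists_isPuncture_of_mem_Omega hT₀.1) _
  have hP : IsPatch P :=
    ⟨⟨fun t ht => hT₀.1.1.1.1 t ht.1, fun t ht t' ht' => hT₀.1.1.1.2 t ht.1 t' ht'.1⟩, hPfin⟩
  obtain ⟨x, hx⟩ := S.exists_subset_translateSet_of_isPatch hA1 hA3 hT₀.1 hT.1 (sep_subset _ _) hP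
  have hTx : translateSet T x ∈ S.Omega := S.translateSet_mem_Omega hT.1 x
  obtain ⟨t₀, ht₀, ht₀0⟩ := hT₀.2
  have ht₀P : t₀ ∈ P :=
    ⟨ht₀, 0, interior_subset ht₀0.self_mem_interior, mem_ball_self (by positivity)⟩
  exact ⟨x, ⟨hTx, t₀, hx ht₀P, ht₀0⟩, S.tilesAt_ball_eq_of_subset hT₀.1.1 hTx.1.1
    (S.exists_isPuncture_of_mem_Omega hTx) hC (by linarith) hPfin.countable hx⟩

theorem exists_translate_tilingDist_lt (hA1 : S.Primitive) (hA3 : S.SubBijective)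
    {T₀ T : Set (Tile d)} (hT₀ : T₀ ∈ S.OmegaPunc) (hT : T ∈ S.OmegaPunc) {ε : ℝ} (hε : 0 < ε) :
    ∃ x : Pt d, translateSet T x ∈ S.OmegaPunc ∧ tilingDist T₀ (translateSet T x) < ε := by
  obtain ⟨x, hx, heq⟩ := S.exists_translate_tilesAt_ball_eq hA1 hA3 hT₀ hT
    (one_div_pos.mpr (half_pos hε))
  exact ⟨x, hx, (tilingDist_le_of_tilesAt_ball_eq (half_pos hε) heq).trans_lt (half_lt_self hε)⟩

end SubstSystem

theorem stmt2_general {d : ℕ} (S : SubstSystem d)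
    (hA1 : S.Primitive) (hA3 : S.SubBijective)
    (G : Subgroup (Pt d ≃ₗᵢ[ℝ] Pt d)) (σ : SymmAction S G) :
    (∀ E : Set (Set (Tile d)), E ⊆ S.OmegaPunc → S.OpenInPunc E →
      (∀ T ∈ E, ∀ T' : Set (Tile d), (T, T') ∈ S.Rpunc →
        ∀ g : G, σ.actSet g⁻¹ T' ∈ E) →
      E = ∅ ∨ E = S.OmegaPunc) ∧
    (∀ T ∈ S.OmegaPunc,
      S.DenseInPunc {T'' | ∃ (g : G) (x : Pt d),
        translateSet T x ∈ S.OmegaPunc ∧ T'' = σ.actSet g⁻¹ (translateSet T x)}) := by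
  refine ⟨fun E hE hEopen hEinv => ?_, fun T hT T₀ hT₀ ε hε => ?_⟩
  · refine E.eq_empty_or_nonempty.imp id fun ⟨T₁, hT₁⟩ => hE.antisymm fun T₀ hT₀ => ?_
    obtain ⟨ε, hε, hball⟩ := hEopen.2 T₁ hT₁
    obtain ⟨x, hx, hdist⟩ := S.exists_translate_tilingDist_lt hA1 hA3 (hE hT₁) hT₀ hε
    have hrel : (translateSet T₀ x, T₀) ∈ S.Rpunc :=
      ⟨hx, hT₀, -x, by rw [translateSet_translateSet, add_neg_cancel, translateSet_zero]⟩
    simpa using hEinv _ (hball _ hx hdist) T₀ hrel 1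
  · obtain ⟨x, hx, hdist⟩ := S.exists_translate_tilingDist_lt hA1 hA3 hT₀ hT hε
    exact ⟨_, ⟨1, x, hx, by simp⟩, hdist⟩

/-- For a finite symmetry group `G` acting freely on `𝒫`, the only
open invariant subsets of `Ω_punc` for `R_punc ⋊ G` are `∅` and `Ω_punc`;
equivalently, every `R_punc ⋊ G`-orbit is dense in `Ω_punc`. -/
theorem stmt2 {d : ℕ} (hd : 1 ≤ d) (S : SubstSystem d)
    (hA1 : S.Primitive) (hA2 : S.FLC) (hA3 : S.SubBijective)
    (G : Subgroup (Pt d ≃ₗᵢ[ℝ] Pt d)) [Finite G] (σ : SymmAction S G)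
    (hfree : σ.FreeOnProto) :
    (∀ E : Set (Set (Tile d)), E ⊆ S.OmegaPunc → S.OpenInPunc E →
      (∀ T ∈ E, ∀ T' : Set (Tile d), (T, T') ∈ S.Rpunc →
        ∀ g : G, σ.actSet g⁻¹ T' ∈ E) →
      E = ∅ ∨ E = S.OmegaPunc) ∧
    (∀ T ∈ S.OmegaPunc,
      S.DenseInPunc {T'' | ∃ (g : G) (x : Pt d),
        translateSet T x ∈ S.OmegaPunc ∧ T'' = σ.actSet g⁻¹ (translateSet T x)}) :=
  stmt2_general S hA1 hA3 G σ
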